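/- arXiv:1802.10355 — 7 statements merged into one kernel-verified Lean document; each statement's English description precedes it below -/
import Mathlib

section
/- Let w be a word with two periods p and p' such that p + p' ≤ |w|. Then gcd(p, p') is also a period of w. (Here p is a period of w if 0 < p < |w| and w[i] = w[j] whenever i ≡ j (mod p).) -/
/-- `p` is a period of the word `w` of length `n` (positions `1..n`):
`0 < p < n` and `w i = w j` whenever `i ≡ j (mod p)` for valid indices. -/
def IsPeriod {A : Type*} (w : ℕ → A) (n p : ℕ) : Prop :=
  0 < p ∧ p < n ∧
    ∀ i j, 1 ≤ i → i ≤ n → 1 ≤ j → j ≤ n → i % p = j % p → w i = w j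

/-- A single-step period property gives `IsPeriod`. -/
lemma isPeriod_of_step {A : Type*} {w : ℕ → A} {m q : ℕ} (hq : 0 < q) (hqm : q < m)
    (hstep : ∀ i, 1 ≤ i → i + q ≤ m → w i = w (i + q)) : IsPeriod w m q := by
  have chain : ∀ k i, 1 ≤ i → i + k * q ≤ m → w i = w (i + k * q) := by
    intro k
    induction k with
    | zero => simp
    | succ k ih =>
      intro i hi hle
      have hkq : (k + 1) * q = k * q + q := by ring
      rw [hkq] at hle ⊢
      have h1 : i + q ≤ m := by omega
      rw [hstep i hi h1]
      have := ih (i + q) (by omega) (by omega)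
      rw [this]
      congr 1
      omega
  have main : ∀ i j, i ≤ j → 1 ≤ i → j ≤ m → i % q = j % q → w i = w j := by
    intro i j hij hi hj hmod
    have hdvd : q ∣ (j - i) :=
      Nat.dvd_of_mod_eq_zero (Nat.sub_mod_eq_zero_of_mod_eq hmod.symm)
    obtain ⟨k, hk⟩ := hdvd
    have hj' : j = i + k * q := by rw [mul_comm]; omega
    rw [hj']
    exact chain k i hi (by omega)
  refine ⟨hq, hqm, fun i j hi hin hj hjn hmod => ?_⟩
  rcases le_total i j with hle | hle
  · exact main i j hle hi hjn hmod
  · exact (main j i hle hj hin hmod.symm).symm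

private lemma fw_aux {A : Type*} (s : ℕ) : ∀ (w : ℕ → A) (n p p' : ℕ), p' ≤ s → p ≤ p' →
    IsPeriod w n p → IsPeriod w n p' → p + p' ≤ n → IsPeriod w n (Nat.gcd p p') := by
  induction s with
  | zero => intro w n p p' hs _ _ hp' _; exact absurd hp'.1 (by omega)
  | succ s ih =>
    intro w n p p' hs hle hp hp' h
    rcases eq_or_lt_of_le hle with heq | hlt
    · subst heq
      rw [Nat.gcd_self]
      exact hp
    · -- p < p'
      set q := p' - p with hqdef
      have hq : 0 < q := by omega
      have hp0 : 0 < p := hp.1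
      have hp'n : p' < n := hp'.2.1
      -- q is a period of w on [1, n-p]
      have hPq : IsPeriod w (n - p) q := by
        refine isPeriod_of_step hq (by omega) ?_
        intro i hi hle'
        have hip : i + p' ≤ n := by omega
        have e1 : w i = w (i + p') := by
          refine hp'.2.2 i (i + p') hi (by omega) (by omega) hip ?_
          simp [Nat.add_mod_right]
        have e2 : w (i + p') = w (i + q) := by
          refine hp.2.2 (i + p') (i + q) (by omega) hip (by omega) (by omega) ?_
          have : i + p' = (i + q) + p := by omega
          rw [this, Nat.add_mod_right]
        rw [e1, e2]
      -- p is a period of w on [1, n-p]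
      have hPp : IsPeriod w (n - p) p := by
        refine ⟨hp0, by omega, fun i j hi hin hj hjn hmod => ?_⟩
        exact hp.2.2 i j hi (by omega) hj (by omega) hmod
      have hsum : (min p q) + (max p q) ≤ n - p := by
        have : min p q + max p q = p + q := by omega
        omega
      have hgq : Nat.gcd p q = Nat.gcd p p' := Nat.gcd_sub_self_right (le_of_lt hlt)
      have inner : IsPeriod w (n - p) (Nat.gcd p p') := by
        rcases le_total p q with hpq | hqp
        · have := ih w (n - p) p q (by omega) hpq hPp hPq (by omega)
          rwa [hgq] at this
        · have := ih w (n - p) q p (by omega) hqp hPq hPp (by omega)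
          rwa [Nat.gcd_comm, hgq] at this
      -- extend from [1, n - p] to [1, n]
      set g := Nat.gcd p p' with hgdef
      have hg0 : 0 < g := Nat.gcd_pos_of_pos_left p' hp0
      have hgp : g ∣ p := Nat.gcd_dvd_left p p'
      have hgle : g ≤ p := Nat.le_of_dvd hp0 hgp
      refine ⟨hg0, by omega, fun i j hi hin hj hjn hmod => ?_⟩
      have key : ∀ i, 1 ≤ i → i ≤ n →
          ∃ i', 1 ≤ i' ∧ i' ≤ n - p ∧ i' % g = i % g ∧ w i' = w i := by
        intro i hi hin
        by_cases hcase : i ≤ n - p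
        · exact ⟨i, hi, hcase, rfl, rfl⟩
        · refine ⟨i - p, by omega, by omega, ?_, ?_⟩
          · have hpg : p % g = 0 := by
              obtain ⟨c, hc⟩ := hgp
              rw [hc, Nat.mul_mod_right]
            conv_rhs => rw [show i = (i - p) + p by omega]
            simp [Nat.add_mod, hpg]
          · refine hp.2.2 (i - p) i (by omega) (by omega) hi hin ?_
            conv_rhs => rw [show i = (i - p) + p by omega]
            rw [Nat.add_mod_right]
      obtain ⟨i', hi'1, hi'2, hi'3, hi'4⟩ := key i hi hin
      obtain ⟨j', hj'1, hj'2, hj'3, hj'4⟩ := key j hj hjn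
      rw [← hi'4, ← hj'4]
      exact inner.2.2 i' j' hi'1 hi'2 hj'1 hj'2 (by rw [hi'3, hj'3, hmod])

/-- Fine–Wilf: if `p` and `p'` are periods of `w` with `p + p' ≤ |w|`,
then `gcd p p'` is also a period of `w`. -/
theorem fine_wilf {A : Type*} (w : ℕ → A) (n p p' : ℕ)
    (hp : IsPeriod w n p) (hp' : IsPeriod w n p') (h : p + p' ≤ n) :
    IsPeriod w n (Nat.gcd p p') := by
  rcases le_total p p' with hle | hle
  · exact fw_aux p' w n p p' le_rfl hle hp hp' h
  · rw [Nat.gcd_comm]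
    exact fw_aux p w n p' p le_rfl hle hp' hp (by omega)
end

section
/- Let n be a natural number and C ⊆ {(x,y) ∈ ℤ² : 1 ≤ y ≤ n-1 and 1 ≤ x ≤ n - y} a set of points such that no two distinct points of C 1-cover the same point of ℤ². Then |C| ≤ nπ²/6 - 3n/4. -/
open Real

/-- `(x̂,ŷ)` γ-covers `(x,y)` iff `x̂ - γŷ ≤ x ≤ x̂` and `ŷ(1-γ) ≤ y ≤ ŷ`. -/
def Covers (γ : ℝ) (c q : ℤ × ℤ) : Prop :=
  (c.1 : ℝ) - γ * c.2 ≤ q.1 ∧ q.1 ≤ c.1 ∧ (c.2 : ℝ) * (1 - γ) ≤ (q.2 : ℝ) ∧ q.2 ≤ c.2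

/-- If no two distinct points of `C ⊆ {(x,y) : 1 ≤ y ≤ n-1, 1 ≤ x ≤ n-y}`
1-cover a common integer point, then `|C| ≤ nπ²/6 - 3n/4`. -/
theorem card_C_le_gamma_one (n : ℕ)
    (C : Set (ℤ × ℤ))
    (hsub : C ⊆ {q : ℤ × ℤ | 1 ≤ q.2 ∧ q.2 ≤ (n : ℤ) - 1 ∧ 1 ≤ q.1 ∧ q.1 ≤ (n : ℤ) - q.2})
    (hcov : ∀ c₁ ∈ C, ∀ c₂ ∈ C, c₁ ≠ c₂ → ∀ q : ℤ × ℤ, ¬ (Covers 1 c₁ q ∧ Covers 1 c₂ q)) :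
    (Nat.card C : ℝ) ≤ n * π ^ 2 / 6 - 3 * n / 4 := by
  classical
  have hpi : (3.141592 : ℝ) < π := Real.pi_gt_d6
  -- Case n ≤ 1 : C is empty
  rcases le_or_gt n 1 with hn | hn
  · have hempty : C = ∅ := by
      ext c
      simp only [Set.mem_empty_iff_false, iff_false]
      intro hc
      have h := hsub hc
      simp only [Set.mem_setOf_eq] at h
      have hn' : (n : ℤ) ≤ 1 := by exact_mod_cast hn
      omega
    rw [hempty]
    have h0 : (Nat.card (∅ : Set (ℤ × ℤ)) : ℝ) = 0 := by simp
    rw [h0]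
    have hn0 : (0:ℝ) ≤ (n:ℝ) := by positivity
    have hp2 : (9:ℝ) ≤ π ^ 2 := by nlinarith [hpi]
    nlinarith [mul_nonneg hn0 (by linarith : (0:ℝ) ≤ π ^ 2 - 9/2)]
  -- n ≥ 2
  have hfin : C.Finite := by
    apply Set.Finite.subset ((Set.finite_Icc (1:ℤ) ((n:ℤ)-1)).prod (Set.finite_Icc (1:ℤ) ((n:ℤ)-1)))
    intro q hq
    have h := hsub hq
    simp only [Set.mem_setOf_eq] at h
    constructor <;> simp only [Set.mem_Icc] <;> omega
  -- key disjointness of segments [x-y, x] in row 0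
  have key : ∀ c ∈ C, ∀ c' ∈ C, c ≠ c' → ∀ p : ℤ,
      c.1 - c.2 ≤ p → p ≤ c.1 → c'.1 - c'.2 ≤ p → p ≤ c'.1 → False := by
    intro c hc c' hc' hne p h1 h2 h3 h4
    have hy := (hsub hc).1
    have hy' := (hsub hc').1
    apply hcov c hc c' hc' hne (p, 0)
    constructor
    · refine ⟨?_, h2, ?_, by omega⟩
      · push_cast; linarith [(by exact_mod_cast h1 : (c.1 : ℝ) - c.2 ≤ (p:ℝ))]
      · push_cast; ring_nf; norm_num
    · refine ⟨?_, h4, ?_, by omega⟩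
      · push_cast; linarith [(by exact_mod_cast h3 : (c'.1 : ℝ) - c'.2 ≤ (p:ℝ))]
      · push_cast; ring_nf; norm_num
  -- the counting function
  set f : ℤ × ℤ → ℤ := fun c => if c.1 ≤ c.2 then 0 else c.1 / 2 with hf
  have hmaps : ∀ c ∈ hfin.toFinset, f c ∈ Finset.Icc (0:ℤ) (((n:ℤ)-1)/2) := by
    intro c hc
    rw [Set.Finite.mem_toFinset] at hc
    have h := hsub hc
    simp only [Set.mem_setOf_eq] at h
    simp only [hf, Finset.mem_Icc]
    split_ifs with hcase
    · constructor
      · rfl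
      · omega
    · omega
  have hinj : Set.InjOn f hfin.toFinset := by
    intro c hc c' hc' heq
    rw [Finset.mem_coe, Set.Finite.mem_toFinset] at hc hc'
    by_contra hne
    have h := hsub hc
    have h' := hsub hc'
    simp only [Set.mem_setOf_eq] at h h'
    simp only [hf] at heq
    split_ifs at heq with h1 h2 h2
    · -- both have x ≤ y; both segments contain 1
      exact key c hc c' hc' hne 1 (by omega) (by omega) (by omega) (by omega)
    · omega
    · omega
    · -- both have x > y; c.1/2 = c'.1/2 forces |c.1 - c'.1| ≤ 1
      have habs : c.1 - 1 ≤ c'.1 ∧ c'.1 - 1 ≤ c.1 := by omega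
      rcases le_or_gt c'.1 c.1 with hle | hlt
      · exact key c hc c' hc' hne c'.1 (by omega) hle (by omega) le_rfl
      · exact key c hc c' hc' hne c.1 (by omega) le_rfl (by omega) (by omega)
  have hcard : hfin.toFinset.card ≤ (Finset.Icc (0:ℤ) (((n:ℤ)-1)/2)).card :=
    Finset.card_le_card_of_injOn f hmaps hinj
  have hIcc : (Finset.Icc (0:ℤ) (((n:ℤ)-1)/2)).card = (((n:ℤ)-1)/2 + 1).toNat := by
    rw [Int.card_Icc]
    omega
  have hNat : Nat.card C = hfin.toFinset.card := by
    rw [Nat.card_eq_card_finite_toFinset hfin]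
  -- 2 * |C| ≤ n + 1
  have h2card : 2 * (Nat.card C : ℤ) ≤ (n : ℤ) + 1 := by
    rw [hNat]
    have := hcard
    rw [hIcc] at this
    have h2 : (2:ℤ) ≤ (n:ℤ) := by exact_mod_cast hn
    omega
  have hreal : (Nat.card C : ℝ) ≤ ((n:ℝ) + 1) / 2 := by
    have : (2 * (Nat.card C : ℤ) : ℝ) ≤ ((n : ℤ) : ℝ) + 1 := by exact_mod_cast h2card
    push_cast at this ⊢
    linarith
  have hn2 : (2:ℝ) ≤ (n:ℝ) := by exact_mod_cast hn
  nlinarith [hpi, hreal, hn2, sq_nonneg (π - 3.141592)]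
end

section
/- Let w be a word of length n, and let φ map a maximal gapped repeat (L,R) of w with period q = beg(R) - beg(L) to the point (end(L), q). If (x,y) is the image under φ of a maximal α-gapped repeat of w, then (x+1,y) is not the image under φ of any maximal α-gapped repeat of w. -/
/-- `(L,R) = ([lb..le],[rb..re])` is a gapped repeat of the word `w` of length `n`. -/
def IsGR {A : Type*} (w : ℕ → A) (n lb le rb re : ℕ) : Prop :=
  1 ≤ lb ∧ lb ≤ le ∧ lb < rb ∧ rb ≤ re ∧ re ≤ n ∧ re - rb = le - lb ∧
    ∀ k, k ≤ le - lb → w (lb + k) = w (rb + k)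

/-- Maximal gapped repeat: arms extendable neither to the left nor to the right. -/
def IsMaxGR {A : Type*} (w : ℕ → A) (n lb le rb re : ℕ) : Prop :=
  IsGR w n lb le rb re ∧ (lb = 1 ∨ w (lb - 1) ≠ w (rb - 1)) ∧
    (re = n ∨ w (le + 1) ≠ w (re + 1))

/-- α-gapped: the period `rb - lb` is at most `α` times the arm length. -/
def AlphaGapped (α : ℝ) (lb le rb : ℕ) : Prop :=
  ((rb : ℝ) - lb) ≤ α * ((le : ℝ) - lb + 1)

/-- If `(x, y)` is in the image of `φ : (L,R) ↦ (end L, beg R - beg L)` on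
maximal α-gapped repeats, then `(x+1, y)` is not. -/
theorem phi_image_not_adjacent {A : Type*} (w : ℕ → A) (n : ℕ) (α : ℝ) (x y : ℕ)
    (h : ∃ lb le rb, IsMaxGR w n lb le rb (rb + (le - lb)) ∧
      AlphaGapped α lb le rb ∧ le = x ∧ rb - lb = y) :
    ¬ ∃ lb le rb, IsMaxGR w n lb le rb (rb + (le - lb)) ∧
      AlphaGapped α lb le rb ∧ le = x + 1 ∧ rb - lb = y := by
  obtain ⟨lb1, le1, rb1, ⟨⟨h1a, hle1, hlt1, h1d, hre1, h1f, _⟩, _, hmax1⟩, _, hle1x, hy1⟩ := h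
  rintro ⟨lb2, le2, rb2, ⟨⟨h2a, hle2, hlt2, h2d, hre2, h2f, hgr2⟩, _, _⟩, _, hle2x, hy2⟩
  have heq : w (le1 + 1) = w (le1 + 1 + y) := by
    have := hgr2 (le2 - lb2) (by omega)
    have e1 : lb2 + (le2 - lb2) = le1 + 1 := by omega
    have e2 : rb2 + (le2 - lb2) = le1 + 1 + y := by omega
    rwa [e1, e2] at this
  rcases hmax1 with hn | hne
  · omega
  · exact hne (by rw [show rb1 + (le1 - lb1) + 1 = le1 + 1 + y by omega]; exact heq)
end

section
/- Let w be a word and (L,R) a maximal gapped palindrome of w with overlapping or adjacent arms such that L and R are contained in one run r with L and R strictly inside r in the relevant direction (i.e., the periodic extension covers the inward boundary). If the runs generating the periodic suffix of L and the periodic prefix of R coincide, then either beg(R) - end(L) ≤ 2 (so (L,R) is an ordinary palindrome) or (L,R) is not maximal. -/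
/-- `(L,R) = ([lb..le],[rb..re])` is a gapped palindrome of the word `w` of length `n`:
the factor at `R` is the reverse of the factor at `L`. -/
def IsGP {A : Type*} (w : ℕ → A) (n lb le rb re : ℕ) : Prop :=
  1 ≤ lb ∧ lb ≤ le ∧ lb ≤ rb ∧ rb ≤ re ∧ re ≤ n ∧ re - rb = le - lb ∧
    ∀ k, k ≤ le - lb → w (lb + k) = w (re - k)

/-- Maximal gapped palindrome: extendable neither outwards nor inwards. -/
def IsMaxGP {A : Type*} (w : ℕ → A) (n lb le rb re : ℕ) : Prop :=
  IsGP w n lb le rb re ∧ (lb = 1 ∨ re = n ∨ w (lb - 1) ≠ w (re + 1)) ∧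
    w (le + 1) ≠ w (rb - 1)

/-- `p` is a period of the segment `[a..b]` of `w`. -/
def SegPeriod {A : Type*} (w : ℕ → A) (a b p : ℕ) : Prop :=
  ∀ i, a ≤ i → i + p ≤ b → w i = w (i + p)

/-- `[a..b]` is a run of `w` (of length `n`) with smallest period `p`:
a maximal periodic segment. -/
def IsRun {A : Type*} (w : ℕ → A) (n a b p : ℕ) : Prop :=
  1 ≤ a ∧ a ≤ b ∧ b ≤ n ∧ 0 < p ∧ 2 * p ≤ b - a + 1 ∧ SegPeriod w a b p ∧
    (∀ q, 0 < q → SegPeriod w a b q → p ≤ q) ∧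
    (a = 1 ∨ ¬ SegPeriod w (a - 1) b p) ∧ (b = n ∨ ¬ SegPeriod w a (b + 1) p)

/-- Sum of exponents of all runs of `w`. -/
noncomputable def SumExp {A : Type*} (w : ℕ → A) (n : ℕ) : ℝ :=
  ∑ᶠ r ∈ {r : ℕ × ℕ × ℕ | IsRun w n r.1 r.2.1 r.2.2},
    (((r.2.1 : ℝ) - (r.1 : ℝ) + 1) / (r.2.2 : ℝ))

/-- The segment `[lb..le]` has a periodic suffix of length at least `β(le - lb + 1)`
(a segment is periodic if its smallest period is at most half its length). -/
def HasPerSuffix {A : Type*} (w : ℕ → A) (lb le : ℕ) (β : ℝ) : Prop :=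
  ∃ ℓ p : ℕ, 0 < p ∧ 2 * p ≤ ℓ ∧ ℓ ≤ le - lb + 1 ∧ β * ((le : ℝ) - (lb : ℝ) + 1) ≤ (ℓ : ℝ) ∧
    ∀ i, le + 1 - ℓ ≤ i → i + p ≤ le → w i = w (i + p)

/-- β-periodic gapped palindrome: `L ≢ R` and the left arm has a periodic suffix
of length at least `β|L|`. -/
def BetaPeriodicGP {A : Type*} (w : ℕ → A) (lb le rb : ℕ) (β : ℝ) : Prop :=
  lb ≠ rb ∧ HasPerSuffix w lb le β

/-- Ordinary palindrome: `L ≡ R`. -/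
def OrdinaryGP (lb rb : ℕ) : Prop := lb = rb

/-- If a single periodic segment (run) of period `p` contains both a suffix of the
left arm of length `s ≥ 2p` and the corresponding reversed prefix of the right arm
of a gapped palindrome, then either `beg R - end L ≤ 2` (it is an ordinary
palindrome) or the gapped palindrome is not maximal. -/
theorem periodic_overlap_palindrome {A : Type*} (w : ℕ → A) (n lb le rb re : ℕ)
    (hgp : IsGP w n lb le rb re)
    (p s a b : ℕ) (hp : 0 < p) (hs : 2 * p ≤ s) (hsu : s ≤ le - lb + 1)
    (ha : a ≤ le + 1 - s) (hb : rb + s - 1 ≤ b)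
    (hrun : SegPeriod w a b p) :
    rb ≤ le + 2 ∨ ¬ IsMaxGP w n lb le rb re := by
  by_cases h : rb ≤ le + 2
  · exact Or.inl h
  · refine Or.inr ?_
    rintro ⟨hgp', hout, hin⟩
    apply hin
    obtain ⟨h1, h2, h3, h4, h5, h6, h7⟩ := hgp
    have e1 : w (le + 1 - p) = w (le + 1) := by
      have := hrun (le + 1 - p) (by omega) (by omega)
      rwa [Nat.sub_add_cancel (by omega)] at this
    have e2 : w (rb - 1) = w (rb - 1 + p) := hrun (rb - 1) (by omega) (by omega)
    have e3 : w (lb + (le + 1 - p - lb)) = w (re - (le + 1 - p - lb)) :=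
      h7 _ (by omega)
    have eq1 : lb + (le + 1 - p - lb) = le + 1 - p := by omega
    have eq2 : re - (le + 1 - p - lb) = rb - 1 + p := by omega
    rw [eq1, eq2] at e3
    rw [← e1, e3, ← e2]
end

section
/- Let w be a word of length n, and let (L,R) be a maximal α-gapped β-aperiodic palindrome with u = |L|, mapped to the point (m,d) where m = ⌈(beg(L)+end(L))/2⌉ and d = ⌊(beg(R)+end(R))/2⌋ - m. Then for every integer i with -⌊u/2⌋ - 1 ≤ i ≤ -1 or 1 ≤ i ≤ ⌈u/2⌉, the point (m+i, d-2i) is not the image of any maximal α-gapped β-aperiodic palindrome under this map. -/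
/-- β-aperiodic maximal α-gapped palindrome: a maximal α-gapped palindrome that
is neither β-periodic nor an ordinary palindrome. -/
def BetaAperiodicMaxGP {A : Type*} (w : ℕ → A) (n : ℕ) (α β : ℝ)
    (lb le rb re : ℕ) : Prop :=
  IsMaxGP w n lb le rb re ∧ AlphaGapped α lb le rb ∧
    ¬ BetaPeriodicGP w lb le rb β ∧ ¬ OrdinaryGP lb rb

/-- `m = ⌈(beg L + end L)/2⌉`, the mid-position of the left arm. -/
def phiM (lb le : ℕ) : ℤ := ((lb : ℤ) + le + 1) / 2

/-- `d = ⌊(beg R + end R)/2⌋ - m`. -/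
def phiD (lb le rb re : ℕ) : ℤ := ((rb : ℤ) + re) / 2 - phiM lb le

set_option maxHeartbeats 1600000 in
/-- Auxiliary: two maximal gapped palindromes with the same reflection center
whose left arms interact as prescribed lead to a contradiction. -/
lemma midpoint_map_gaps_aux {A : Type*} (w : ℕ → A) (n : ℕ)
    (lb le rb lb' le' rb' M' : ℕ)
    (A1 : 1 ≤ lb) (A2 : lb ≤ le) (A3 : lb ≤ rb) (A5 : rb + (le - lb) ≤ n)
    (B1 : 1 ≤ lb') (B2 : lb' ≤ le') (B3 : lb' ≤ rb') (B5 : rb' + (le' - lb') ≤ n)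
    (armA : ∀ x, lb ≤ x → x ≤ le → w x = w (lb + (rb + (le - lb)) - x))
    (armB : ∀ x, lb' ≤ x → x ≤ le' → w x = w (lb' + (rb' + (le' - lb')) - x))
    (Aout : lb = 1 ∨ rb + (le - lb) = n ∨ w (lb - 1) ≠ w (rb + (le - lb) + 1))
    (Ain : w (le + 1) ≠ w (rb - 1))
    (Bout : lb' = 1 ∨ rb' + (le' - lb') = n ∨
      w (lb' - 1) ≠ w (rb' + (le' - lb') + 1))
    (Bin : w (le' + 1) ≠ w (rb' - 1))
    (hS : lb' + (rb' + (le' - lb')) = lb + (rb + (le - lb)))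
    (hB1 : lb' ≤ M') (hB2 : M' ≤ le')
    (hcases : (lb ≤ M' ∧ M' ≤ le) ∨ M' = le + 1 ∨ M' + 1 = lb)
    (hne0 : lb' = lb → le' = le → False) : False := by
  have hPM' : w M' = w (lb + (rb + (le - lb)) - M') := by
    have h := armB M' hB1 hB2
    rwa [hS] at h
  rcases hcases with ⟨hx1, hx2⟩ | hM | hM
  · -- the two left arms intersect at M', hence coincide
    have hle : le' = le := by
      by_contra hne
      rcases Nat.lt_or_ge le' le with h | h
      · have hp := armA (le' + 1) (by omega) (by omega)
        have e : lb + (rb + (le - lb)) - (le' + 1) = rb' - 1 := by omega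
        rw [e] at hp
        exact Bin hp
      · have hp := armB (le + 1) (by omega) (by omega)
        have e : lb' + (rb' + (le' - lb')) - (le + 1) = rb - 1 := by omega
        rw [e] at hp
        exact Ain hp
    have hlb : lb' = lb := by
      by_contra hne
      rcases Nat.lt_or_ge lb lb' with h | h
      · have hp := armA (lb' - 1) (by omega) (by omega)
        have e : lb + (rb + (le - lb)) - (lb' - 1) = rb' + (le' - lb') + 1 := by
          omega
        rw [e] at hp
        rcases Bout with h' | h' | h'
        · omega
        · omega
        · exact h' hp
      · have hp := armB (lb - 1) (by omega) (by omega)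
        have e : lb' + (rb' + (le' - lb')) - (lb - 1) = rb + (le - lb) + 1 := by
          omega
        rw [e] at hp
        rcases Aout with h' | h' | h'
        · omega
        · omega
        · exact h' hp
    exact hne0 hlb hle
  · -- M' = le + 1 : contradicts inward maximality of the unprimed palindrome
    have e : lb + (rb + (le - lb)) - M' = rb - 1 := by omega
    rw [e, hM] at hPM'
    exact Ain hPM'
  · -- M' = lb - 1 : contradicts outward maximality of the unprimed palindrome
    rcases Aout with h' | h' | h'
    · omega
    · omega
    · have e : lb + (rb + (le - lb)) - M' = rb + (le - lb) + 1 := by omega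
      rw [e] at hPM'
      have e1 : lb - 1 = M' := by omega
      rw [← e1] at hPM'
      exact h' hPM'

set_option maxHeartbeats 1600000 in
/-- If a maximal α-gapped β-aperiodic palindrome maps to `(m,d)` under the midpoint
map, then for every integer `i` with `-⌊u/2⌋ - 1 ≤ i ≤ -1` or `1 ≤ i ≤ ⌈u/2⌉`
(where `u` is the arm length), the point `(m + i, d - 2i)` is not the image of any
maximal α-gapped β-aperiodic palindrome. -/
theorem midpoint_map_gaps {A : Type*} (w : ℕ → A) (n : ℕ) (α β : ℝ)
    (lb le rb : ℕ)
    (hP : BetaAperiodicMaxGP w n α β lb le rb (rb + (le - lb)))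
    (i : ℤ)
    (hi : (-(((le - lb + 1 : ℕ) : ℤ) / 2) - 1 ≤ i ∧ i ≤ -1) ∨
          (1 ≤ i ∧ i ≤ (((le - lb + 1 : ℕ) : ℤ) + 1) / 2)) :
    ¬ ∃ lb' le' rb', BetaAperiodicMaxGP w n α β lb' le' rb' (rb' + (le' - lb')) ∧
        phiM lb' le' = phiM lb le + i ∧
        phiD lb' le' rb' (rb' + (le' - lb')) =
          phiD lb le rb (rb + (le - lb)) - 2 * i := by
  rintro ⟨lb', le', rb', hBP', hm', hd'⟩
  obtain ⟨⟨⟨B1, B2, B3, B4, B5, B6, B7⟩, Bout, Bin⟩, -, -, -⟩ := hBP'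
  obtain ⟨⟨⟨A1, A2, A3, A4, A5, A6, A7⟩, Aout, Ain⟩, -, -, -⟩ := hP
  clear A4 A6 B4 B6
  -- arm matching lemmas
  have armA : ∀ x, lb ≤ x → x ≤ le → w x = w (lb + (rb + (le - lb)) - x) := by
    intro x hx1 hx2
    have h := A7 (x - lb) (by omega)
    have e1 : lb + (x - lb) = x := by omega
    have e2 : rb + (le - lb) - (x - lb) = lb + (rb + (le - lb)) - x := by omega
    rw [e1, e2] at h
    exact h
  have armB : ∀ x, lb' ≤ x → x ≤ le' →
      w x = w (lb' + (rb' + (le' - lb')) - x) := by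
    intro x hx1 hx2
    have h := B7 (x - lb') (by omega)
    have e1 : lb' + (x - lb') = x := by omega
    have e2 : rb' + (le' - lb') - (x - lb') = lb' + (rb' + (le' - lb')) - x := by
      omega
    rw [e1, e2] at h
    exact h
  clear A7 B7
  simp only [phiD, phiM] at hm' hd'
  -- the two palindromes share the same reflection center
  have hS : lb' + (rb' + (le' - lb')) = lb + (rb + (le - lb)) := by omega
  clear hd'
  have hne0 : lb' = lb → le' = le → False := by
    intro h1 h2
    rcases hi with ⟨h3, h4⟩ | ⟨h3, h4⟩ <;> omega
  -- midpoint of the primed left arm, as a natural number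
  obtain ⟨M', hB1, hB2, hcases⟩ :
      ∃ M', lb' ≤ M' ∧ M' ≤ le' ∧
        ((lb ≤ M' ∧ M' ≤ le) ∨ M' = le + 1 ∨ M' + 1 = lb) := by
    refine ⟨lb' + (le' - lb' + 1) / 2, by omega, by omega, ?_⟩
    rcases hi with ⟨h3, h4⟩ | ⟨h3, h4⟩ <;> omega
  exact midpoint_map_gaps_aux w n lb le rb lb' le' rb' M' A1 A2 A3 A5 B1 B2 B3
    B5 armA armB Aout Ain Bout Bin hS hB1 hB2 hcases hne0
end

section
/- Let w be a word of length n and (L,R) a maximal gapped repeat of w with overlapping arms, i.e., end(L) ≥ beg(R), with period q = beg(R) - beg(L). Then there is a run r of w with smallest period p such that p divides q, L ∪ R ⊆ r, beg(L) = beg(r), and end(R) = end(r). Consequently a maximal gapped repeat with overlapping arms is uniquely determined by its period and the run containing both arms. -/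
/-- Iterating a period. -/
theorem segPeriod_mul {A : Type*} (w : ℕ → A) {a b p : ℕ}
    (hp : SegPeriod w a b p) :
    ∀ m i, a ≤ i → i + m * p ≤ b → w i = w (i + m * p) := by
  intro m
  induction m with
  | zero => simp
  | succ m ih =>
    intro i hi h2
    have hmp : m * p ≤ (m + 1) * p := Nat.mul_le_mul_right p (Nat.le_succ m)
    have h3 : i + m * p ≤ b := by omega
    have e : i + (m + 1) * p = i + m * p + p := by ring
    rw [ih i hi h3, e]
    exact hp (i + m * p) (by omega) (by omega)

/-- Fine–Wilf periodicity lemma for segments (with `p ≤ q`). -/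
theorem fineWilf {A : Type*} (w : ℕ → A) :
    ∀ s p q a b, p + q ≤ s → 0 < p → p ≤ q →
      SegPeriod w a b p → SegPeriod w a b q → a + p + q ≤ b + 1 →
      SegPeriod w a b (Nat.gcd p q) := by
  intro s
  induction s with
  | zero => intro p q a b hs hp _ _ _ _; omega
  | succ s ih =>
    intro p q a b hs hp hpq hP hQ hlen
    rcases eq_or_lt_of_le hpq with rfl | hlt
    · simpa using hP
    · have hq'pos : 0 < q - p := by omega
      have hpb : p ≤ b := by omega
      have hQ1 : SegPeriod w a (b - p) (q - p) := by
        intro i hi h2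
        have h3 : i + q ≤ b := by omega
        have e : i + (q - p) + p = i + q := by omega
        calc w i = w (i + q) := hQ i hi h3
        _ = w (i + (q - p)) := by
            rw [← e]; exact (hP (i + (q - p)) (by omega) (by omega)).symm
      have hP1 : SegPeriod w a (b - p) p := fun i hi h2 => hP i hi (by omega)
      have hQ2 : SegPeriod w (a + p) b (q - p) := by
        intro i hi h2
        have e1 : i - p + p = i := by omega
        have e2 : i - p + q = i + (q - p) := by omega
        have t1 : w (i - p) = w i := by
          have := hP (i - p) (by omega) (by omega)
          rwa [e1] at this
        have t2 : w (i - p) = w (i + (q - p)) := by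
          have := hQ (i - p) (by omega) (by omega)
          rwa [e2] at this
        exact t1.symm.trans t2
      have hP2 : SegPeriod w (a + p) b p := fun i hi h2 => hP i (by omega) h2
      have hgcd : Nat.gcd p (q - p) = Nat.gcd p q :=
        Nat.gcd_sub_self_right (le_of_lt hlt)
      have hd1 : SegPeriod w a (b - p) (Nat.gcd p q) := by
        rcases le_total p (q - p) with hle | hle
        · rw [← hgcd]; exact ih p (q - p) a (b - p) (by omega) hp hle hP1 hQ1 (by omega)
        · rw [← hgcd, Nat.gcd_comm]
          exact ih (q - p) p a (b - p) (by omega) hq'pos hle hQ1 hP1 (by omega)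
      have hd2 : SegPeriod w (a + p) b (Nat.gcd p q) := by
        rcases le_total p (q - p) with hle | hle
        · rw [← hgcd]; exact ih p (q - p) (a + p) b (by omega) hp hle hP2 hQ2 (by omega)
        · rw [← hgcd, Nat.gcd_comm]
          exact ih (q - p) p (a + p) b (by omega) hq'pos hle hQ2 hP2 (by omega)
      intro i hi h2
      have hdp : Nat.gcd p q ≤ p := Nat.gcd_le_left _ hp
      have hdq' : Nat.gcd p q ∣ (q - p) := by
        rw [← hgcd]; exact Nat.gcd_dvd_right _ _
      have hdq'le : Nat.gcd p q ≤ q - p := Nat.le_of_dvd hq'pos hdq'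
      rcases le_or_gt (i + Nat.gcd p q) (b - p) with hc | hc
      · exact hd1 i hi hc
      · exact hd2 i (by omega) h2

/-- A maximal gapped repeat with overlapping arms (`end L ≥ beg R`) determines a run
`r` of `w` whose smallest period divides the period of the repeat, with
`beg L = beg r` and `end R = end r`; consequently such a repeat is uniquely
determined by its period and this run. -/
theorem overlapping_repeat_run {A : Type*} (w : ℕ → A) (n lb le rb re : ℕ)
    (h : IsMaxGR w n lb le rb re) (hov : rb ≤ le) :
    ∃ a b p, IsRun w n a b p ∧ p ∣ (rb - lb) ∧ lb = a ∧ re = b ∧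
      ∀ lb' le' rb' re', IsMaxGR w n lb' le' rb' re' → rb' ≤ le' →
        rb' - lb' = rb - lb → lb' = a → re' = b →
        (lb', le', rb', re') = (lb, le, rb, re) := by
  classical
  obtain ⟨⟨h1, h2, h3, h4, h5, h6, h7⟩, hL, hR⟩ := h
  have hre : re = le + (rb - lb) := by omega
  have hQ : SegPeriod w lb re (rb - lb) := by
    intro i hi h2'
    have hk : i - lb ≤ le - lb := by omega
    have := h7 (i - lb) hk
    have e1 : lb + (i - lb) = i := by omega
    have e2 : rb + (i - lb) = i + (rb - lb) := by omega
    rwa [e1, e2] at this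
  have hE : ∃ p, 0 < p ∧ SegPeriod w lb re p := ⟨rb - lb, by omega, hQ⟩
  obtain ⟨hppos, hP⟩ := Nat.find_spec hE
  set p := Nat.find hE with hpdef
  have hmin : ∀ q, 0 < q → SegPeriod w lb re q → p ≤ q :=
    fun q hq hs => Nat.find_min' hE ⟨hq, hs⟩
  have hpq : p ≤ rb - lb := hmin _ (by omega) hQ
  have hgcdP : SegPeriod w lb re (Nat.gcd p (rb - lb)) :=
    fineWilf w (p + (rb - lb)) p (rb - lb) lb re le_rfl hppos hpq hP hQ (by omega)
  have hgcdpos : 0 < Nat.gcd p (rb - lb) := Nat.gcd_pos_of_pos_left _ hppos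
  have hgcdeq : Nat.gcd p (rb - lb) = p :=
    le_antisymm (Nat.gcd_le_left _ hppos) (hmin _ hgcdpos hgcdP)
  have hdvd : p ∣ (rb - lb) := hgcdeq ▸ Nat.gcd_dvd_right p (rb - lb)
  obtain ⟨m, hm0⟩ := hdvd
  have hm : rb - lb = m * p := by rw [hm0, Nat.mul_comm]
  refine ⟨lb, re, p, ⟨h1, by omega, h5, hppos, by omega, hP, hmin, ?_, ?_⟩,
    ⟨m, hm0⟩, rfl, rfl, ?_⟩
  · rcases hL with hl | hl
    · exact Or.inl hl
    · right
      intro hcon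
      apply hl
      have := segPeriod_mul w hcon m (lb - 1) le_rfl (by rw [← hm]; omega)
      rw [← hm] at this
      rwa [show lb - 1 + (rb - lb) = rb - 1 from by omega] at this
  · rcases hR with hr | hr
    · exact Or.inl hr
    · right
      intro hcon
      apply hr
      have := segPeriod_mul w hcon m (le + 1) (by omega) (by rw [← hm]; omega)
      rw [← hm] at this
      rwa [show le + 1 + (rb - lb) = re + 1 from by omega] at this
  · intro lb' le' rb' re' h' hov' hq' ha hb
    obtain ⟨⟨h1', h2', h3', h4', h5', h6', h7'⟩, _, _⟩ := h'
    have e1 : lb' = lb := ha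
    have e2 : rb' = rb := by omega
    have e3 : re' = re := hb
    have e4 : le' = le := by omega
    subst e1; subst e2; subst e3; subst e4; rfl
end

section
/- Let w be a word and α > 1, 0 < β < 1 reals. The number of maximal α-gapped β-periodic repeats of w (where β-periodic means the left arm has a periodic prefix of length at least β times the arm length) is at most 2α·E(w)/β, where E(w) is the sum of exponents of runs of w. -/
/-- The segment `[lb..le]` has a periodic prefix of length at least `β(le - lb + 1)`
(a segment is periodic if its smallest period is at most half its length). -/
def HasPerPrefix {A : Type*} (w : ℕ → A) (lb le : ℕ) (β : ℝ) : Prop :=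
  ∃ ℓ p : ℕ, 0 < p ∧ 2 * p ≤ ℓ ∧ ℓ ≤ le - lb + 1 ∧
    β * ((le : ℝ) - (lb : ℝ) + 1) ≤ (ℓ : ℝ) ∧
    ∀ i, lb ≤ i → i + p ≤ lb + ℓ - 1 → w i = w (i + p)

namespace GappedAux


variable {A : Type*}

lemma segPeriod_shrink {w : ℕ → A} {a b b' p : ℕ} (h : SegPeriod w a b p) (hb : b' ≤ b) :
    SegPeriod w a b' p := fun i hi hip => h i hi (hip.trans hb)

lemma segPeriod_shrink_left {w : ℕ → A} {a a' b p : ℕ} (h : SegPeriod w a b p) (ha : a ≤ a') :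
    SegPeriod w a' b p := fun i hi hip => h i (ha.trans hi) hip

lemma segPeriod_iterate {w : ℕ → A} {a b p : ℕ} (h : SegPeriod w a b p) (k : ℕ) :
    ∀ i, a ≤ i → i + k * p ≤ b → w i = w (i + k * p) := by
  induction k with
  | zero => intro i _ _; simp
  | succ k ih =>
    intro i hi hb
    rw [Nat.succ_mul] at hb ⊢
    have h1 : w i = w (i + p) := h i hi (by omega)
    have h2 : w (i + p) = w (i + p + k * p) := ih (i + p) (by omega) (by omega)
    rw [h1, h2]; congr 1; omega

lemma segPeriod_mod {w : ℕ → A} {a b p : ℕ} (h : SegPeriod w a b p) (hp : 0 < p)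
    {i : ℕ} (ha : a ≤ i) (hb : i ≤ b) : w i = w (a + (i - a) % p) := by
  have hm : p * ((i - a) / p) + (i - a) % p = i - a := Nat.div_add_mod _ _
  rw [Nat.mul_comm] at hm
  have key : a + (i - a) % p + (i - a) / p * p = i := by omega
  have h2 := segPeriod_iterate h ((i - a) / p) (a + (i - a) % p) (by omega) (by omega)
  rw [key] at h2
  exact h2.symm

lemma segPeriod_extend {w : ℕ → A} {a b c p d : ℕ}
    (hpb : SegPeriod w a b p) (hp0 : 0 < p) (hd0 : 0 < d) (hdp : d < p)
    (hc : a + p + d ≤ c + 1) (hcb : c ≤ b) (hdper : SegPeriod w a c d) :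
    SegPeriod w a b d := by
  intro i hi hib
  have h1 := segPeriod_mod hpb hp0 hi (by omega)
  have h2 := segPeriod_mod hpb hp0 (show a ≤ i + d by omega) hib
  set r := (i - a) % p with hr
  have hrp : r < p := Nat.mod_lt _ hp0
  have h3 : w (a + r) = w (a + r + d) := hdper (a + r) (by omega) (by omega)
  have hmod : (i + d - a) % p = (r + d) % p := by
    have h4 : i + d - a = (i - a) + d := by omega
    rw [h4, Nat.add_mod, ← hr, Nat.mod_eq_of_lt hdp]
  rcases Nat.lt_or_ge (r + d) p with hlt | hge
  · have he : a + (i + d - a) % p = a + r + d := by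
      rw [hmod, Nat.mod_eq_of_lt hlt]; omega
    rw [h1, h3, ← he, ← h2]
  · have hsub : (r + d) % p = r + d - p := by
      rw [Nat.mod_eq_sub_mod hge, Nat.mod_eq_of_lt (by omega)]
    have h5 : w (a + (r + d - p)) = w (a + (r + d - p) + p) :=
      hpb _ (by omega) (by omega)
    have he2 : a + (r + d - p) + p = a + r + d := by omega
    have he3 : a + (i + d - a) % p = a + (r + d - p) := by rw [hmod, hsub]
    rw [h1, h3, ← he2, ← h5, ← he3, ← h2]

lemma no_close_occ {w : ℕ → A} {n a b p m x y : ℕ} (hrun : IsRun w n a b p)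
    (hm : 2 * p ≤ m) (hmb : a + m - 1 ≤ b)
    (hx : ∀ k, k ≤ m - 1 → w (a + k) = w (x + k))
    (hy : ∀ k, k ≤ m - 1 → w (a + k) = w (y + k))
    (hxy : x < y) (hd : y - x < p) : False := by
  obtain ⟨_, hab, _, hp0, _, hper, hmin, _, _⟩ := hrun
  set d := y - x with hdd
  have hd0 : 0 < d := by omega
  have hstep : SegPeriod w a (a + (m - 1)) d := by
    intro i hi hiq
    have hk : i - a + d ≤ m - 1 := by omega
    calc w i = w (a + (i - a)) := by congr 1; omega
      _ = w (a + (i - a + d)) := by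
          rw [hy _ (show i - a ≤ m - 1 by omega), hx _ hk]
          congr 1; omega
      _ = w (i + d) := by congr 1; omega
  have hext : SegPeriod w a b d :=
    segPeriod_extend hper hp0 hd0 (by omega) (by omega) (by omega) hstep
  have := hmin d hd0 hext
  omega


lemma exists_run {w : ℕ → A} {n lb c p₀ : ℕ}
    (h1 : 1 ≤ lb) (hcn : c ≤ n) (hlc : 2 * p₀ ≤ c - lb + 1) (hp0 : 0 < p₀)
    (hper : SegPeriod w lb c p₀)
    (hmin : ∀ q, 0 < q → SegPeriod w lb c q → p₀ ≤ q) :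
    ∃ a b, IsRun w n a b p₀ ∧ a ≤ lb ∧ c ≤ b := by
  classical
  have hlbc : lb < c := by omega
  set P : ℕ → Prop := fun k => SegPeriod w (lb - k) c p₀ with hP
  have hP0 : P 0 := by simpa [hP] using hper
  set k := Nat.findGreatest P (lb - 1) with hk
  have hkle : k ≤ lb - 1 := Nat.findGreatest_le _
  have hPk : P k := Nat.findGreatest_spec (Nat.zero_le _) hP0
  set a := lb - k with ha
  have haseg : SegPeriod w a c p₀ := hPk
  set Q : ℕ → Prop := fun b' => c ≤ b' ∧ SegPeriod w a b' p₀ with hQ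
  have hQc : Q c := ⟨le_refl _, haseg⟩
  set b := Nat.findGreatest Q n with hb
  have hcbb : c ≤ b := Nat.le_findGreatest hcn hQc
  have hbn : b ≤ n := Nat.findGreatest_le _
  have hQb : Q b := Nat.findGreatest_spec hcn hQc
  refine ⟨a, b, ⟨by omega, by omega, hbn, hp0, by omega, hQb.2, ?_, ?_, ?_⟩, by omega, hcbb⟩
  · intro q hq hseg
    exact hmin q hq (segPeriod_shrink (segPeriod_shrink_left hseg (by omega)) (by omega))
  · by_cases hA : a = 1
    · exact Or.inl hA
    · refine Or.inr fun hcon => ?_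
      have hk1 : k + 1 ≤ lb - 1 := by omega
      have hng : ¬ P (k + 1) := Nat.findGreatest_is_greatest (n := lb - 1) (by omega) hk1
      apply hng
      show SegPeriod w (lb - (k + 1)) c p₀
      have he : lb - (k + 1) = a - 1 := by omega
      rw [he]
      exact segPeriod_shrink hcon (by omega)
  · by_cases hB : b = n
    · exact Or.inl hB
    · refine Or.inr fun hcon => ?_
      have hng : ¬ Q (b + 1) := Nat.findGreatest_is_greatest (n := n) (by omega) (by omega)
      exact hng ⟨by omega, hcon⟩

lemma maxGR_not_lt {w : ℕ → A} {n lb rb le1 le2 : ℕ}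
    (h1 : IsMaxGR w n lb le1 rb (rb + (le1 - lb)))
    (h2 : IsMaxGR w n lb le2 rb (rb + (le2 - lb))) : ¬ le1 < le2 := by
  intro hlt
  obtain ⟨⟨hlb1, hle1, hlbrb, hrbre1, hre1n, _, _⟩, _, hmax1⟩ := h1
  obtain ⟨⟨_, hle2, _, _, hre2n, _, heq2⟩, _, _⟩ := h2
  have hkk := heq2 (le1 - lb + 1) (by omega)
  have e1 : lb + (le1 - lb + 1) = le1 + 1 := by omega
  have e2 : rb + (le1 - lb + 1) = (rb + (le1 - lb)) + 1 := by omega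
  rw [e1, e2] at hkk
  rcases hmax1 with h | h
  · omega
  · exact h hkk

lemma maxGR_unique {w : ℕ → A} {n lb rb le1 le2 : ℕ}
    (h1 : IsMaxGR w n lb le1 rb (rb + (le1 - lb)))
    (h2 : IsMaxGR w n lb le2 rb (rb + (le2 - lb))) : le1 = le2 :=
  le_antisymm (not_lt.mp (maxGR_not_lt h2 h1)) (not_lt.mp (maxGR_not_lt h1 h2))


end GappedAux

namespace GappedAux
variable {A : Type*}

def GoodA (w : ℕ → A) (β : ℝ) (lb le rb a b p : ℕ) (j : ℕ) : Prop :=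
  lb = a ∧ j = (rb - lb) / p ∧
    ∃ ℓ : ℕ, 2 * p ≤ ℓ ∧ ℓ ≤ le - lb + 1 ∧ a + ℓ - 1 ≤ b ∧
      β * ((le : ℝ) - (lb : ℝ) + 1) ≤ (ℓ : ℝ)

def GoodB (w : ℕ → A) (β : ℝ) (lb le rb a b p : ℕ) (j : ℕ) : Prop :=
  rb = a ∧ j = (rb - lb) / p ∧
    ∃ ℓ : ℕ, 2 * p ≤ ℓ ∧ ℓ ≤ le - lb + 1 ∧ a + ℓ - 1 ≤ b ∧
      β * ((le : ℝ) - (lb : ℝ) + 1) ≤ (ℓ : ℝ)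

lemma gapA {w : ℕ → A} {n : ℕ} {β : ℝ} {a b p lb1 le1 rb1 lb2 le2 rb2 j1 j2 : ℕ}
    (h1 : IsGR w n lb1 le1 rb1 (rb1 + (le1 - lb1)))
    (h2 : IsGR w n lb2 le2 rb2 (rb2 + (le2 - lb2)))
    (hrun : IsRun w n a b p)
    (g1 : GoodA w β lb1 le1 rb1 a b p j1) (g2 : GoodA w β lb2 le2 rb2 a b p j2)
    (hlt : rb1 < rb2) : j1 < j2 := by
  obtain ⟨hA1, hj1, ℓ1, hp1, hu1, hb1, -⟩ := g1
  obtain ⟨hA2, hj2, ℓ2, hp2, hu2, hb2, -⟩ := g2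
  have hp0 : 0 < p := hrun.2.2.2.1
  have hlble1 : lb1 ≤ le1 := h1.2.1
  have hlble2 : lb2 ≤ le2 := h2.2.1
  have hlbrb1 : lb1 < rb1 := h1.2.2.1
  have hlbrb2 : lb2 < rb2 := h2.2.2.1
  have hplt : p ≤ rb2 - rb1 := by
    by_contra hcon
    push_neg at hcon
    refine no_close_occ (m := min ℓ1 ℓ2) (x := rb1) (y := rb2) hrun
      (by omega) (by omega) ?_ ?_ hlt (by omega)
    · intro k hk
      have hh := h1.2.2.2.2.2.2 k (by omega)
      rw [← hA1]
      exact hh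
    · intro k hk
      have hh := h2.2.2.2.2.2.2 k (by omega)
      rw [← hA2]
      exact hh
  have hstep : rb1 - a + p ≤ rb2 - a := by omega
  have h6 := Nat.div_le_div_right (c := p) hstep
  rw [Nat.add_div_right _ hp0] at h6
  rw [hA1] at hj1
  rw [hA2] at hj2
  omega

lemma gapB {w : ℕ → A} {n : ℕ} {β : ℝ} {a b p lb1 le1 rb1 lb2 le2 rb2 j1 j2 : ℕ}
    (h1 : IsGR w n lb1 le1 rb1 (rb1 + (le1 - lb1)))
    (h2 : IsGR w n lb2 le2 rb2 (rb2 + (le2 - lb2)))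
    (hrun : IsRun w n a b p)
    (g1 : GoodB w β lb1 le1 rb1 a b p j1) (g2 : GoodB w β lb2 le2 rb2 a b p j2)
    (hlt : lb2 < lb1) : j1 < j2 := by
  obtain ⟨hA1, hj1, ℓ1, hp1, hu1, hb1, -⟩ := g1
  obtain ⟨hA2, hj2, ℓ2, hp2, hu2, hb2, -⟩ := g2
  have hp0 : 0 < p := hrun.2.2.2.1
  have hlble1 : lb1 ≤ le1 := h1.2.1
  have hlble2 : lb2 ≤ le2 := h2.2.1
  have hlbrb1 : lb1 < rb1 := h1.2.2.1
  have hlbrb2 : lb2 < rb2 := h2.2.2.1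
  have hplt : p ≤ lb1 - lb2 := by
    by_contra hcon
    push_neg at hcon
    refine no_close_occ (m := min ℓ1 ℓ2) (x := lb2) (y := lb1) hrun
      (by omega) (by omega) ?_ ?_ hlt (by omega)
    · intro k hk
      have hh := h2.2.2.2.2.2.2 k (by omega)
      rw [hA2] at hh
      exact hh.symm
    · intro k hk
      have hh := h1.2.2.2.2.2.2 k (by omega)
      rw [hA1] at hh
      exact hh.symm
  have hstep : rb1 - lb1 + p ≤ rb2 - lb2 := by omega
  have h6 := Nat.div_le_div_right (c := p) hstep
  rw [Nat.add_div_right _ hp0] at h6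
  omega

lemma injA {w : ℕ → A} {n : ℕ} {β : ℝ} {a b p lb1 le1 rb1 lb2 le2 rb2 j : ℕ}
    (h1 : IsMaxGR w n lb1 le1 rb1 (rb1 + (le1 - lb1)))
    (h2 : IsMaxGR w n lb2 le2 rb2 (rb2 + (le2 - lb2)))
    (hrun : IsRun w n a b p)
    (g1 : GoodA w β lb1 le1 rb1 a b p j) (g2 : GoodA w β lb2 le2 rb2 a b p j) :
    lb1 = lb2 ∧ le1 = le2 ∧ rb1 = rb2 := by
  have hrb : rb1 = rb2 := by
    rcases Nat.lt_trichotomy rb1 rb2 with h | h | h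
    · exact absurd (gapA h1.1 h2.1 hrun g1 g2 h) (lt_irrefl j)
    · exact h
    · exact absurd (gapA h2.1 h1.1 hrun g2 g1 h) (lt_irrefl j)
  have hlb : lb1 = lb2 := g1.1.trans g2.1.symm
  subst hrb hlb
  exact ⟨rfl, maxGR_unique h1 h2, rfl⟩

lemma injB {w : ℕ → A} {n : ℕ} {β : ℝ} {a b p lb1 le1 rb1 lb2 le2 rb2 j : ℕ}
    (h1 : IsMaxGR w n lb1 le1 rb1 (rb1 + (le1 - lb1)))
    (h2 : IsMaxGR w n lb2 le2 rb2 (rb2 + (le2 - lb2)))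
    (hrun : IsRun w n a b p)
    (g1 : GoodB w β lb1 le1 rb1 a b p j) (g2 : GoodB w β lb2 le2 rb2 a b p j) :
    lb1 = lb2 ∧ le1 = le2 ∧ rb1 = rb2 := by
  have hlb : lb1 = lb2 := by
    rcases Nat.lt_trichotomy lb1 lb2 with h | h | h
    · exact absurd (gapB h2.1 h1.1 hrun g2 g1 h) (lt_irrefl j)
    · exact h
    · exact absurd (gapB h1.1 h2.1 hrun g1 g2 h) (lt_irrefl j)
  have hrb : rb1 = rb2 := g1.1.trans g2.1.symm
  subst hrb hlb
  exact ⟨rfl, maxGR_unique h1 h2, rfl⟩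

lemma j_pos {w : ℕ → A} {n : ℕ} {β : ℝ} {a b p lb le rb j : ℕ}
    (ht : IsGR w n lb le rb (rb + (le - lb)))
    (hrun : IsRun w n a b p)
    (hg : GoodA w β lb le rb a b p j ∨ GoodB w β lb le rb a b p j) : 1 ≤ j := by
  have hp0 : 0 < p := hrun.2.2.2.1
  have hlbrb : lb < rb := ht.2.2.1
  have hlble : lb ≤ le := ht.2.1
  have heq := ht.2.2.2.2.2.2
  rcases hg with ⟨hA, hj, ℓ, hpℓ, huℓ, hbℓ, -⟩ | ⟨hB, hj, ℓ, hpℓ, huℓ, hbℓ, -⟩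
  · have hple : p ≤ rb - lb := by
      by_contra hcon
      push_neg at hcon
      refine no_close_occ (m := ℓ) (x := a) (y := rb) hrun hpℓ (by omega)
        (fun k _ => rfl) ?_ (by omega) (by omega)
      intro k hk
      rw [← hA]
      exact heq k (by omega)
    rw [hj]
    exact (Nat.one_le_div_iff hp0).mpr hple
  · have hple : p ≤ rb - lb := by
      by_contra hcon
      push_neg at hcon
      refine no_close_occ (m := ℓ) (x := lb) (y := a) hrun hpℓ (by omega)
        ?_ (fun k _ => rfl) (by omega) (by omega)
      intro k hk
      have hh := heq k (by omega)
      rw [hB] at hh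
      exact hh.symm
    rw [hj]
    exact (Nat.one_le_div_iff hp0).mpr hple

lemma j_le {w : ℕ → A} {n : ℕ} {α β : ℝ} (hα : 0 < α) (hβ : 0 < β)
    {a b p lb le rb j : ℕ}
    (ht : IsGR w n lb le rb (rb + (le - lb)))
    (hag : AlphaGapped α lb le rb)
    (hrun : IsRun w n a b p)
    (hg : GoodA w β lb le rb a b p j ∨ GoodB w β lb le rb a b p j) :
    (j : ℝ) ≤ α * ((b : ℝ) - (a : ℝ) + 1) / (β * (p : ℝ)) := by
  have hp0 : 0 < p := hrun.2.2.2.1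
  have hab : a ≤ b := hrun.2.1
  have hlbrb : lb < rb := ht.2.2.1
  have hlble : lb ≤ le := ht.2.1
  obtain ⟨hj, ℓ, hpℓ, huℓ, hbℓ, hβℓ⟩ :
      j = (rb - lb) / p ∧ ∃ ℓ, 2 * p ≤ ℓ ∧ ℓ ≤ le - lb + 1 ∧ a + ℓ - 1 ≤ b ∧
        β * ((le : ℝ) - (lb : ℝ) + 1) ≤ (ℓ : ℝ) := by
    rcases hg with ⟨-, hj, hℓ⟩ | ⟨-, hj, hℓ⟩ <;> exact ⟨hj, hℓ⟩
  have hjp : (j : ℝ) * p ≤ ((rb - lb : ℕ) : ℝ) := by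
    have h0 := Nat.div_mul_le_self (rb - lb) p
    rw [hj]
    exact_mod_cast h0
  have hq : ((rb - lb : ℕ) : ℝ) = (rb : ℝ) - lb := by
    push_cast [Nat.cast_sub hlbrb.le]; ring
  have hL : (ℓ : ℝ) ≤ (b : ℝ) - a + 1 := by
    have h0 : ℓ + a ≤ b + 1 := by omega
    have h0' : (ℓ : ℝ) + a ≤ (b : ℝ) + 1 := by exact_mod_cast h0
    linarith
  have hp0' : (0 : ℝ) < p := by exact_mod_cast hp0
  rw [le_div_iff₀ (by positivity)]
  have h1 : (j : ℝ) * p ≤ α * ((le : ℝ) - lb + 1) := by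
    rw [hq] at hjp
    exact hjp.trans hag
  have h2 : β * ((j : ℝ) * p) ≤ α * ℓ := by
    calc β * ((j : ℝ) * p) ≤ β * (α * ((le : ℝ) - lb + 1)) := by nlinarith
      _ = α * (β * ((le : ℝ) - lb + 1)) := by ring
      _ ≤ α * ℓ := by nlinarith
  calc (j : ℝ) * (β * p) = β * ((j : ℝ) * p) := by ring
    _ ≤ α * ℓ := h2
    _ ≤ α * ((b : ℝ) - a + 1) := by nlinarith

lemma assign {w : ℕ → A} {n : ℕ} {β : ℝ} {lb le rb : ℕ}
    (hmax : IsMaxGR w n lb le rb (rb + (le - lb)))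
    (hpp : HasPerPrefix w lb le β) :
    ∃ (c : Bool) (a b p₀ : ℕ) (j : ℕ), IsRun w n a b p₀ ∧
      (c = true → GoodA w β lb le rb a b p₀ j) ∧
      (c = false → GoodB w β lb le rb a b p₀ j) := by
  classical
  obtain ⟨hgr, hmaxL, -⟩ := hmax
  obtain ⟨hlb1, hlble, hlbrb, hrbre, hren, hlen, heq⟩ := hgr
  obtain ⟨ℓ, p, hp0, h2p, hℓu, hβℓ, hper⟩ := hpp
  have hℓ2 : 2 ≤ ℓ := by omega
  set cc := lb + ℓ - 1 with hcc
  have hperc : SegPeriod w lb cc p := hper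
  have hex : ∃ q, 0 < q ∧ SegPeriod w lb cc q := ⟨p, hp0, hperc⟩
  set p₀ := Nat.find hex with hp₀def
  have hp₀pos : 0 < p₀ := (Nat.find_spec hex).1
  have hp₀per : SegPeriod w lb cc p₀ := (Nat.find_spec hex).2
  have hmin : ∀ q, 0 < q → SegPeriod w lb cc q → p₀ ≤ q := fun q hq1 hq2 =>
    Nat.find_min' hex ⟨hq1, hq2⟩
  have hp₀p : p₀ ≤ p := hmin p hp0 hperc
  have hccn : cc ≤ n := by omega
  obtain ⟨a, b, hrunL, halb, hcb⟩ :=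
    exists_run hlb1 hccn (by omega) hp₀pos hp₀per hmin
  by_cases hA : lb = a
  · refine ⟨true, a, b, p₀, (rb - lb) / p₀, hrunL, fun _ => ?_, fun hcon => by simp at hcon⟩
    exact ⟨hA, rfl, ℓ, by omega, hℓu, by omega, hβℓ⟩
  · have hcopy : ∀ k, k ≤ ℓ - 1 → w (lb + k) = w (rb + k) := fun k hk => heq k (by omega)
    have htoR : ∀ q, 0 < q → SegPeriod w lb cc q → SegPeriod w rb (rb + ℓ - 1) q := by
      intro q hq hs i hi hiq
      have hk : i - rb + q ≤ ℓ - 1 := by omega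
      calc w i = w (rb + (i - rb)) := by congr 1; omega
        _ = w (lb + (i - rb)) := (hcopy _ (by omega)).symm
        _ = w (lb + (i - rb) + q) := hs _ (by omega) (by omega)
        _ = w (lb + (i - rb + q)) := by congr 1; omega
        _ = w (rb + (i - rb + q)) := hcopy _ hk
        _ = w (i + q) := by congr 1; omega
    have htoL : ∀ q, 0 < q → SegPeriod w rb (rb + ℓ - 1) q → SegPeriod w lb cc q := by
      intro q hq hs i hi hiq
      have hk : i - lb + q ≤ ℓ - 1 := by omega
      calc w i = w (lb + (i - lb)) := by congr 1; omega
        _ = w (rb + (i - lb)) := hcopy _ (by omega)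
        _ = w (rb + (i - lb) + q) := hs _ (by omega) (by omega)
        _ = w (rb + (i - lb + q)) := by congr 1; omega
        _ = w (lb + (i - lb + q)) := (hcopy _ hk).symm
        _ = w (i + q) := by congr 1; omega
    have hperR : SegPeriod w rb (rb + ℓ - 1) p₀ := htoR _ hp₀pos hp₀per
    have hminR : ∀ q, 0 < q → SegPeriod w rb (rb + ℓ - 1) q → p₀ ≤ q :=
      fun q hq1 hq2 => hmin q hq1 (htoL q hq1 hq2)
    have hrb1 : 1 ≤ rb := by omega
    have hrn : rb + ℓ - 1 ≤ n := by omega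
    obtain ⟨a', b', hrunR, harb, hcb'⟩ :=
      exists_run hrb1 hrn (by omega) hp₀pos hperR hminR
    have ha1 : 1 ≤ a := hrunL.1
    have hB : rb = a' := by
      by_contra hB
      have ha'rb : a' < rb := by omega
      have halb' : a < lb := by omega
      have e1 : w (lb - 1) = w (lb - 1 + p₀) :=
        hrunL.2.2.2.2.2.1 (lb - 1) (by omega) (by omega)
      have e2 : w (lb + (p₀ - 1)) = w (rb + (p₀ - 1)) := hcopy _ (by omega)
      have e3 : w (rb - 1) = w (rb - 1 + p₀) :=
        hrunR.2.2.2.2.2.1 (rb - 1) (by omega) (by omega)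
      have efin : w (lb - 1) = w (rb - 1) := by
        rw [e1, e3]
        rw [show lb - 1 + p₀ = lb + (p₀ - 1) by omega,
            show rb - 1 + p₀ = rb + (p₀ - 1) by omega]
        exact e2
      rcases hmaxL with h | h
      · omega
      · exact h efin
    refine ⟨false, a', b', p₀, (rb - lb) / p₀, hrunR, fun hcon => by simp at hcon, fun _ => ?_⟩
    exact ⟨hB, rfl, ℓ, by omega, hℓu, by omega, hβℓ⟩

end GappedAux

open GappedAux

/-- The number of maximal α-gapped β-periodic repeats of `w` (left arm having a
periodic prefix of length ≥ β times the arm length) is at most `2α·E(w)/β`. -/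
theorem count_beta_periodic_repeats {A : Type*} (w : ℕ → A) (n : ℕ) (α β : ℝ)
    (hα : 1 < α) (hβ0 : 0 < β) (hβ1 : β < 1) :
    (Nat.card {t : ℕ × ℕ × ℕ |
        IsMaxGR w n t.1 t.2.1 t.2.2 (t.2.2 + (t.2.1 - t.1)) ∧
        AlphaGapped α t.1 t.2.1 t.2.2 ∧
        HasPerPrefix w t.1 t.2.1 β} : ℝ)
      ≤ 2 * α * SumExp w n / β := by
  classical
  set S : Set (ℕ × ℕ × ℕ) := {t : ℕ × ℕ × ℕ |
      IsMaxGR w n t.1 t.2.1 t.2.2 (t.2.2 + (t.2.1 - t.1)) ∧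
      AlphaGapped α t.1 t.2.1 t.2.2 ∧
      HasPerPrefix w t.1 t.2.1 β} with hS
  have hSfin : S.Finite := by
    apply Set.Finite.subset (Set.finite_Icc ((1, 1, 1) : ℕ × ℕ × ℕ) ((n, n, n) : ℕ × ℕ × ℕ))
    rintro ⟨lb, le, rb⟩ ht
    simp only [hS, Set.mem_setOf_eq] at ht
    obtain ⟨⟨⟨h1, h2, h3, h4, h5, h6, -⟩, -, -⟩, -, -⟩ := ht
    simp only [Set.mem_Icc, Prod.le_def]
    omega
  have hRfin : Set.Finite {r : ℕ × ℕ × ℕ | IsRun w n r.1 r.2.1 r.2.2} := by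
    apply Set.Finite.subset (Set.finite_Icc ((1, 1, 1) : ℕ × ℕ × ℕ) ((n, n, n) : ℕ × ℕ × ℕ))
    rintro ⟨a, b, p⟩ hr
    simp only [Set.mem_setOf_eq] at hr
    obtain ⟨h1, h2, h3, h4, h5, -⟩ := hr
    simp only [Set.mem_Icc, Prod.le_def]
    omega
  set RF := hRfin.toFinset with hRF
  set M : ℕ × ℕ × ℕ → ℕ :=
    fun ρ => ⌊α * ((ρ.2.1 : ℝ) - (ρ.1 : ℝ) + 1) / (β * (ρ.2.2 : ℝ))⌋₊ with hM
  set SF := hSfin.toFinset with hSF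
  have hchoice : ∀ t ∈ S, ∃ x : Bool × (ℕ × ℕ × ℕ) × ℕ,
      IsRun w n x.2.1.1 x.2.1.2.1 x.2.1.2.2 ∧ 1 ≤ x.2.2 ∧ x.2.2 ≤ M x.2.1 ∧
      (x.1 = true → GoodA w β t.1 t.2.1 t.2.2 x.2.1.1 x.2.1.2.1 x.2.1.2.2 x.2.2) ∧
      (x.1 = false → GoodB w β t.1 t.2.1 t.2.2 x.2.1.1 x.2.1.2.1 x.2.1.2.2 x.2.2) := by
    intro t ht
    simp only [hS, Set.mem_setOf_eq] at ht
    obtain ⟨hmax, hag, hpp⟩ := ht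
    obtain ⟨c, a, b, p₀, j, hrun, hA, hB⟩ := assign hmax hpp
    have hg : GoodA w β t.1 t.2.1 t.2.2 a b p₀ j ∨ GoodB w β t.1 t.2.1 t.2.2 a b p₀ j := by
      cases c
      · exact Or.inr (hB rfl)
      · exact Or.inl (hA rfl)
    refine ⟨(c, (a, b, p₀), j), hrun, ?_, ?_, hA, hB⟩
    · exact j_pos hmax.1 hrun hg
    · exact Nat.le_floor (j_le (lt_trans zero_lt_one hα) hβ0 hmax.1 hag hrun hg)
  choose! f hf using hchoice
  set K : Finset (Bool × (ℕ × ℕ × ℕ) × ℕ) :=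
    RF.biUnion (fun ρ => Finset.univ ×ˢ ({ρ} ×ˢ Finset.Icc 1 (M ρ))) with hK
  have hmaps : ∀ t ∈ SF, f t ∈ K := by
    intro t htf
    have ht : t ∈ S := (Set.Finite.mem_toFinset hSfin).mp htf
    obtain ⟨hrun, hj1, hjM, -, -⟩ := hf t ht
    refine Finset.mem_biUnion.mpr ⟨(f t).2.1, ?_, ?_⟩
    · exact (Set.Finite.mem_toFinset hRfin).mpr hrun
    · refine Finset.mem_product.mpr ⟨Finset.mem_univ _, ?_⟩
      refine Finset.mem_product.mpr ⟨Finset.mem_singleton_self _, ?_⟩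
      exact Finset.mem_Icc.mpr ⟨hj1, hjM⟩
  have hinj : Set.InjOn f ↑SF := by
    intro t1 ht1 t2 ht2 hfe
    have hs1 : t1 ∈ S := (Set.Finite.mem_toFinset hSfin).mp (Finset.mem_coe.mp ht1)
    have hs2 : t2 ∈ S := (Set.Finite.mem_toFinset hSfin).mp (Finset.mem_coe.mp ht2)
    obtain ⟨hrun1, -, -, hA1, hB1⟩ := hf t1 hs1
    obtain ⟨hrun2, -, -, hA2, hB2⟩ := hf t2 hs2
    have hmax1 : IsMaxGR w n t1.1 t1.2.1 t1.2.2 (t1.2.2 + (t1.2.1 - t1.1)) := by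
      simp only [hS, Set.mem_setOf_eq] at hs1; exact hs1.1
    have hmax2 : IsMaxGR w n t2.1 t2.2.1 t2.2.2 (t2.2.2 + (t2.2.1 - t2.1)) := by
      simp only [hS, Set.mem_setOf_eq] at hs2; exact hs2.1
    have hcomp : t1.1 = t2.1 ∧ t1.2.1 = t2.2.1 ∧ t1.2.2 = t2.2.2 := by
      cases hc : (f t1).1 with
      | false =>
        have hg1 := hB1 hc
        have hg2 := hB2 (by rw [← hfe]; exact hc)
        rw [← hfe] at hg2
        exact injB hmax1 hmax2 hrun1 hg1 hg2
      | true =>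
        have hg1 := hA1 hc
        have hg2 := hA2 (by rw [← hfe]; exact hc)
        rw [← hfe] at hg2
        exact injA hmax1 hmax2 hrun1 hg1 hg2
    exact Prod.ext hcomp.1 (Prod.ext hcomp.2.1 hcomp.2.2)
  have hcard1 : SF.card ≤ K.card := Finset.card_le_card_of_injOn f hmaps hinj
  have hcard2 : K.card ≤ ∑ ρ ∈ RF, 2 * M ρ := by
    refine le_trans Finset.card_biUnion_le ?_
    refine Finset.sum_le_sum ?_
    intro ρ _
    rw [Finset.card_product, Finset.card_product, Finset.card_univ, Fintype.card_bool,
      Finset.card_singleton, Nat.card_Icc]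
    omega
  have hE : SumExp w n = ∑ ρ ∈ RF, (((ρ.2.1 : ℝ) - (ρ.1 : ℝ) + 1) / (ρ.2.2 : ℝ)) := by
    unfold SumExp
    rw [← Set.Finite.coe_toFinset hRfin, finsum_mem_coe_finset]
  have hterm : ∀ ρ ∈ RF, (M ρ : ℝ) ≤ (α / β) * (((ρ.2.1 : ℝ) - (ρ.1 : ℝ) + 1) / (ρ.2.2 : ℝ)) := by
    intro ρ hρ
    have hrun : IsRun w n ρ.1 ρ.2.1 ρ.2.2 := (Set.Finite.mem_toFinset hRfin).mp hρ
    have hab : ρ.1 ≤ ρ.2.1 := hrun.2.1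
    have hp0 : (0 : ℝ) < (ρ.2.2 : ℝ) := by exact_mod_cast hrun.2.2.2.1
    have hL : (0 : ℝ) ≤ (ρ.2.1 : ℝ) - (ρ.1 : ℝ) + 1 := by
      have : (ρ.1 : ℝ) ≤ (ρ.2.1 : ℝ) := by exact_mod_cast hab
      linarith
    have h1 : (M ρ : ℝ) ≤ α * ((ρ.2.1 : ℝ) - (ρ.1 : ℝ) + 1) / (β * (ρ.2.2 : ℝ)) := by
      apply Nat.floor_le
      apply div_nonneg
      · exact mul_nonneg (by linarith) hL
      · positivity
    have h2 : α * ((ρ.2.1 : ℝ) - (ρ.1 : ℝ) + 1) / (β * (ρ.2.2 : ℝ))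
        = (α / β) * (((ρ.2.1 : ℝ) - (ρ.1 : ℝ) + 1) / (ρ.2.2 : ℝ)) := by
      field_simp
    linarith [h1, h2.le]
  have hnat : Nat.card S = SF.card := by
    rw [Nat.card_coe_set_eq, Set.ncard_eq_toFinset_card _ hSfin]
  rw [hnat, hE]
  have c1 : ((SF.card : ℕ) : ℝ) ≤ ((∑ ρ ∈ RF, 2 * M ρ : ℕ) : ℝ) := by
    exact_mod_cast le_trans hcard1 hcard2
  rw [Nat.cast_sum] at c1
  have c2 : (∑ ρ ∈ RF, ((2 * M ρ : ℕ) : ℝ))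
      ≤ ∑ ρ ∈ RF, 2 * ((α / β) * (((ρ.2.1 : ℝ) - (ρ.1 : ℝ) + 1) / (ρ.2.2 : ℝ))) := by
    refine Finset.sum_le_sum ?_
    intro ρ hρ
    push_cast
    have := hterm ρ hρ
    linarith
  have c3 : ∑ ρ ∈ RF, 2 * ((α / β) * (((ρ.2.1 : ℝ) - (ρ.1 : ℝ) + 1) / (ρ.2.2 : ℝ)))
      = 2 * α * (∑ ρ ∈ RF, (((ρ.2.1 : ℝ) - (ρ.1 : ℝ) + 1) / (ρ.2.2 : ℝ))) / β := by
    calc ∑ ρ ∈ RF, 2 * ((α / β) * (((ρ.2.1 : ℝ) - (ρ.1 : ℝ) + 1) / (ρ.2.2 : ℝ)))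
        = ∑ ρ ∈ RF, (2 * α / β) * (((ρ.2.1 : ℝ) - (ρ.1 : ℝ) + 1) / (ρ.2.2 : ℝ)) := by
          refine Finset.sum_congr rfl ?_
          intro ρ _
          ring
      _ = (2 * α / β) * ∑ ρ ∈ RF, (((ρ.2.1 : ℝ) - (ρ.1 : ℝ) + 1) / (ρ.2.2 : ℝ)) := by
          rw [Finset.mul_sum]
      _ = 2 * α * (∑ ρ ∈ RF, (((ρ.2.1 : ℝ) - (ρ.1 : ℝ) + 1) / (ρ.2.2 : ℝ))) / β := by
          ring
  calc ((SF.card : ℕ) : ℝ) ≤ _ := c1.trans c2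
    _ = _ := c3
end
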